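/- arXiv:1705.10645 — 3 statements merged into one kernel-verified Lean document; each statement's English description precedes it below -/
import Mathlib

section
/- Let G be a compact Hausdorff topological semigroup (associative, jointly continuous multiplication) satisfying both cancellation laws: gh = gk implies h = k, and hg = kg implies h = k. Then G is a topological group. -/
/-!
Ellis–Numakura: a compact Hausdorff semigroup contains an idempotent `e`, and under cancellation
`e` is a two-sided identity and the only idempotent. For each `g` the right ideal `g * G` is again
a compact subsemigroup, so it contains an idempotent, which must be `e`; this gives inverses.
The graph of the inverse map is the closed set `{(g, h) | g * h = e}`, and a map into a compact
space with closed graph is continuous.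
-/

theorem continuous_of_isClosed_graph {X Y : Type*} [TopologicalSpace X] [TopologicalSpace Y]
    [CompactSpace Y] {f : X → Y} (hf : IsClosed {p : X × Y | f p.1 = p.2}) : Continuous f := by
  refine continuous_iff_isClosed.2 fun C hC => ?_
  have hpre : f ⁻¹' C = Prod.fst '' ({p : X × Y | f p.1 = p.2} ∩ Prod.snd ⁻¹' C) := by
    ext x
    simp
  rw [hpre]
  exact isClosedMap_fst_of_compactSpace _ (hf.inter (hC.preimage continuous_snd))

section CancelSemigroup

variable {G : Type*} [Semigroup G] {e : G}

theorem IsIdempotentElem.one_mul [IsLeftCancelMul G] (he : IsIdempotentElem e) (g : G) :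
    e * g = g :=
  mul_left_cancel (a := e) (by rw [← mul_assoc, he.eq])

theorem IsIdempotentElem.mul_one [IsRightCancelMul G] (he : IsIdempotentElem e) (g : G) :
    g * e = g :=
  mul_right_cancel (b := e) (by rw [mul_assoc, he.eq])

theorem IsIdempotentElem.eq_of_isIdempotentElem [IsCancelMul G] {f : G}
    (he : IsIdempotentElem e) (hf : IsIdempotentElem f) : e = f := by
  rw [← hf.mul_one e, he.one_mul]

theorem IsIdempotentElem.mul_eq_of_mul_eq [IsCancelMul G] (he : IsIdempotentElem e) {g y : G}
    (hgy : g * y = e) : y * g = e :=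
  mul_left_cancel (a := g) (by rw [← mul_assoc, hgy, he.one_mul, he.mul_one])

variable [TopologicalSpace G] [CompactSpace G] [T2Space G]

theorem IsIdempotentElem.exists_mul_eq [SeparatelyContinuousMul G] [IsCancelMul G]
    (he : IsIdempotentElem e) (g : G) : ∃ y, g * y = e := by
  have hideal_mul_mem :
      ∀ a ∈ Set.range (g * ·), ∀ b ∈ Set.range (g * ·), a * b ∈ Set.range (g * ·) := by
    rintro _ ⟨a, rfl⟩ _ ⟨b, rfl⟩
    exact ⟨a * g * b, by simp only [mul_assoc]⟩
  obtain ⟨_, ⟨y, rfl⟩, hidem⟩ := exists_idempotent_in_compact_subsemigroup continuous_mul_const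
    (Set.range (g * ·)) ⟨g * g, g, rfl⟩ (isCompact_range (continuous_const_mul g)) hideal_mul_mem
  exact ⟨y, IsIdempotentElem.eq_of_isIdempotentElem hidem he⟩

theorem continuous_of_forall_mul_eq [ContinuousMul G] [IsLeftCancelMul G] {inv : G → G}
    (hinv : ∀ g, g * inv g = e) : Continuous inv := by
  have hgraph : {p : G × G | inv p.1 = p.2} = {p | p.1 * p.2 = e} := by
    ext ⟨g, h⟩
    simp only [Set.mem_ofPred_eq]
    exact ⟨fun hgh => hgh ▸ hinv g, fun hgh => mul_left_cancel ((hinv g).trans hgh.symm)⟩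
  refine continuous_of_isClosed_graph ?_
  rw [hgraph]
  exact isClosed_eq (continuous_fst.mul continuous_snd) continuous_const

end CancelSemigroup

/-- A nonempty compact Hausdorff topological semigroup (jointly continuous
associative multiplication) satisfying both cancellation laws is a topological
group: it has a two-sided identity and a continuous inverse. -/
theorem compact_cancellative_semigroup_is_topological_group
    (G : Type*) [TopologicalSpace G] [T2Space G] [CompactSpace G]
    [Semigroup G] [ContinuousMul G] [Nonempty G]
    (hl : ∀ g h k : G, g * h = g * k → h = k)
    (hr : ∀ g h k : G, h * g = k * g → h = k) :
    ∃ (e : G) (inv : G → G),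
      (∀ g : G, e * g = g) ∧ (∀ g : G, g * e = g) ∧
      (∀ g : G, inv g * g = e) ∧ (∀ g : G, g * inv g = e) ∧
      Continuous inv := by
  have : IsCancelMul G :=
    { mul_left_cancel := fun g h k => hl g h k
      mul_right_cancel := fun g h k => hr g h k }
  obtain ⟨e, he⟩ : ∃ e : G, IsIdempotentElem e :=
    exists_idempotent_of_compact_t2_of_continuous_mul_left continuous_mul_const
  choose inv hinv using he.exists_mul_eq
  exact ⟨e, inv, he.one_mul, he.mul_one, fun g => he.mul_eq_of_mul_eq (hinv g), hinv,
    continuous_of_forall_mul_eq hinv⟩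
end

section
/- Let G be a compact group and A = C(G) the C*-algebra of continuous complex-valued functions on G. Define Δ : C(G) → C(G × G) by Δ(f)(g,h) = f(gh). Then the linear span of functions of the form (g,h) ↦ f₁(g)·f₂(gh), for f₁, f₂ ∈ C(G), is dense in C(G × G). -/
/-!
The functions `(g, h) ↦ f₁ g * f₂ (g * h)` form a unital, conjugation-closed monoid, so their span
is a star subalgebra of `C(G × G, 𝕜)`. It separates points because `(g, h) ↦ (g, g * h)` is
injective and continuous functions separate the points of a compact Hausdorff space, so
Stone–Weierstrass gives density. A general compact group reduces to its Hausdorff separation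
quotient, through which every continuous function on `G × G` factors.
-/

open SeparationQuotient

namespace ContinuousMap

variable {X 𝕜 : Type*} [TopologicalSpace X] [RCLike 𝕜]

theorem dense_span_of_separatesPoints [CompactSpace X] (S : Submonoid C(X, 𝕜))
    (star_mem : ∀ f ∈ S, star f ∈ S) (hS : ((⇑) '' (S : Set C(X, 𝕜))).SeparatesPoints) :
    Dense (Submodule.span 𝕜 (S : Set C(X, 𝕜)) : Set C(X, 𝕜)) := by
  set A := StarAlgebra.adjoin 𝕜 (S : Set C(X, 𝕜))
  have hA : (A : Set C(X, 𝕜)) = Submodule.span 𝕜 (S : Set C(X, 𝕜)) := by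
    have hstar : (S : Set C(X, 𝕜)) ∪ star (S : Set C(X, 𝕜)) = S :=
      Set.union_eq_left.2 fun f hf => by simpa using star_mem _ hf
    rw [← StarSubalgebra.coe_toSubalgebra, StarAlgebra.adjoin_toSubalgebra, hstar,
      ← Subalgebra.coe_toSubmodule, Algebra.adjoin_eq_span, Submonoid.closure_eq]
  have hsep : A.SeparatesPoints := fun x y hxy => by
    obtain ⟨_, ⟨f, hf, rfl⟩, hfxy⟩ := hS hxy
    exact ⟨f, ⟨f, StarAlgebra.subset_adjoin 𝕜 _ hf, rfl⟩, hfxy⟩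
  rw [← hA, dense_iff_closure_eq, ← StarSubalgebra.topologicalClosure_coe,
    starSubalgebra_topologicalClosure_eq_top_of_separatesPoints A hsep, StarSubalgebra.coe_top]

variable (𝕜) in
theorem exists_apply_ne [T35Space X] {x y : X} (hxy : x ≠ y) : ∃ f : C(X, 𝕜), f x ≠ f y := by
  obtain ⟨f, hf, hfxy⟩ := separatesPoints_continuous_of_t35Space hxy
  exact ⟨⟨fun x => (f x : 𝕜), RCLike.continuous_ofReal.comp hf⟩, by simpa using hfxy⟩

end ContinuousMap

theorem SeparationQuotient.surjective_comp_prodMap_mk {X Y Z : Type*} [TopologicalSpace X]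
    [TopologicalSpace Y] [TopologicalSpace Z] [T0Space Z] :
    Function.Surjective fun F : C(SeparationQuotient X × SeparationQuotient Y, Z) =>
      F.comp ⟨Prod.map mk mk, continuous_mk.prodMap continuous_mk⟩ := by
  intro F
  refine ⟨isQuotientMap_prodMap_mk.lift F fun a b hab => ?_, isQuotientMap_prodMap_mk.lift_comp _ _⟩
  simp only [ContinuousMap.coe_mk, Prod.ext_iff, Prod.map_fst, Prod.map_snd, mk_eq_mk] at hab
  exact ((inseparable_prod.2 hab).map F.continuous).eq

section CommSemiring

variable (𝕜 G : Type*) [CommSemiring 𝕜] [TopologicalSpace 𝕜] [IsTopologicalSemiring 𝕜]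
  [TopologicalSpace G] [Mul G]

def shearedProducts : Submonoid C(G × G, 𝕜) where
  carrier := {F | ∃ f₁ f₂ : C(G, 𝕜), ∀ p : G × G, F p = f₁ p.1 * f₂ (p.1 * p.2)}
  one_mem' := ⟨1, 1, fun _ => (one_mul 1).symm⟩
  mul_mem' := by
    rintro F₁ F₂ ⟨f₁, f₂, hF₁⟩ ⟨g₁, g₂, hF₂⟩
    exact ⟨f₁ * g₁, f₂ * g₂, fun p => by simp only [ContinuousMap.mul_apply, hF₁, hF₂]; ring⟩

variable {𝕜 G} [ContinuousMul G]

theorem comp_prodMap_mk_mem_shearedProducts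
    {F : C(SeparationQuotient G × SeparationQuotient G, 𝕜)}
    (hF : F ∈ shearedProducts 𝕜 (SeparationQuotient G)) :
    F.comp ⟨Prod.map mk mk, continuous_mk.prodMap continuous_mk⟩ ∈ shearedProducts 𝕜 G := by
  obtain ⟨f₁, f₂, hF⟩ := hF
  exact ⟨f₁.comp ⟨mk, continuous_mk⟩, f₂.comp ⟨mk, continuous_mk⟩, fun p => by simp [hF, mk_mul]⟩

theorem dense_span_shearedProducts_of_separationQuotient [T0Space 𝕜]
    (h : Dense (Submodule.span 𝕜 (shearedProducts 𝕜 (SeparationQuotient G) :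
        Set C(SeparationQuotient G × SeparationQuotient G, 𝕜)) :
      Set C(SeparationQuotient G × SeparationQuotient G, 𝕜))) :
    Dense (Submodule.span 𝕜 (shearedProducts 𝕜 G : Set C(G × G, 𝕜)) : Set C(G × G, 𝕜)) := by
  set Φ := ContinuousMap.compRightAlgHom 𝕜 𝕜
    (⟨Prod.map mk mk, continuous_mk.prodMap continuous_mk⟩ : C(G × G, _))
  refine (surjective_comp_prodMap_mk.denseRange.dense_image
    (ContinuousMap.continuous_precomp _) h).mono ?_
  rintro _ ⟨F, hF, rfl⟩
  exact (Submodule.map_span_le Φ.toLinearMap _ _).2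
    (fun F hF => Submodule.subset_span (comp_prodMap_mk_mem_shearedProducts hF)) ⟨F, hF, rfl⟩

end CommSemiring

section RCLike

variable {𝕜 G : Type*} [RCLike 𝕜] [TopologicalSpace G] [Mul G]

theorem star_mem_shearedProducts {F : C(G × G, 𝕜)} (hF : F ∈ shearedProducts 𝕜 G) :
    star F ∈ shearedProducts 𝕜 G := by
  obtain ⟨f₁, f₂, hF⟩ := hF
  exact ⟨star f₁, star f₂, fun p => by simp [hF p]⟩

theorem separatesPoints_shearedProducts [T35Space G] [IsLeftCancelMul G] [ContinuousMul G] :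
    ((⇑) '' (shearedProducts 𝕜 G : Set C(G × G, 𝕜))).SeparatesPoints := by
  rintro ⟨g, h⟩ ⟨g', h'⟩ hne
  by_cases hg : g = g'
  · subst hg
    have : g * h ≠ g * h' := fun heq => hne (by rw [mul_left_cancel heq])
    obtain ⟨f, hf⟩ := ContinuousMap.exists_apply_ne 𝕜 this
    exact ⟨_, ⟨f.comp ⟨fun p => p.1 * p.2, by fun_prop⟩, ⟨1, f, fun p => by simp⟩, rfl⟩, by simpa⟩
  · obtain ⟨f, hf⟩ := ContinuousMap.exists_apply_ne 𝕜 hg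
    exact ⟨_, ⟨f.comp ContinuousMap.fst, ⟨f, 1, fun p => by simp⟩, rfl⟩, by simpa⟩

theorem dense_span_shearedProducts [CompactSpace G] [T2Space G] [IsLeftCancelMul G]
    [ContinuousMul G] :
    Dense (Submodule.span 𝕜 (shearedProducts 𝕜 G : Set C(G × G, 𝕜)) : Set C(G × G, 𝕜)) :=
  ContinuousMap.dense_span_of_separatesPoints _ (fun _ => star_mem_shearedProducts)
    separatesPoints_shearedProducts

end RCLike

/-- For a compact group `G`, the linear span of the functions
`(g, h) ↦ f₁ g * f₂ (g * h)` with `f₁ f₂ ∈ C(G, ℂ)` is dense in `C(G × G, ℂ)`. -/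
theorem span_translates_dense_in_C_of_compact_group
    (G : Type*) [TopologicalSpace G] [Group G] [IsTopologicalGroup G] [CompactSpace G] :
    Dense ((Submodule.span ℂ
      {F : C(G × G, ℂ) | ∃ f₁ f₂ : C(G, ℂ), ∀ p : G × G, F p = f₁ p.1 * f₂ (p.1 * p.2)}
      : Submodule ℂ C(G × G, ℂ)) : Set C(G × G, ℂ)) := by
  have : CompactSpace (SeparationQuotient G) := Quotient.compactSpace
  exact dense_span_shearedProducts_of_separationQuotient dense_span_shearedProducts
end

section
/- Let G be a topological group with identity e, and let p : X → G be a covering map with X path-connected and locally path-connected. Fix a point ẽ ∈ p⁻¹(e). Then there exists a unique topological group structure on X with identity ẽ such that p is a continuous group homomorphism. -/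
/-!
The multiplication of `X` is the lift through `p` of `(x, y) ↦ p x * p y`. It exists by the
lifting criterion: for a loop `(a, b)` at `(e₀, e₀)`, the pointwise product of `p ∘ a` and `p ∘ b`
is homotopic to the concatenation of `p ∘ a` and `p ∘ b`, whose lift `a.trans b` is closed. The
inverse is the lift of `x ↦ (p x)⁻¹`: if `Γ` lifts the image of a loop `γ`, then `t ↦ γ t * Γ t`
lifts the constant path at `1`, so `Γ` is closed too. Each group law, and uniqueness, holds
because both sides lift the same map and agree at `e₀`.
-/

/-- The property that `(mul, inv)` is a topological group structure on the covering
space `X` with identity `e₀` making `p` a homomorphism. -/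
def IsLiftedGroupStructure {G X : Type*} [TopologicalSpace G] [Group G]
    [TopologicalSpace X] (p : X → G) (e₀ : X) (mul : X → X → X) (inv : X → X) : Prop :=
  Continuous (fun q : X × X => mul q.1 q.2) ∧ Continuous inv ∧
  (∀ x y z : X, mul (mul x y) z = mul x (mul y z)) ∧
  (∀ x : X, mul e₀ x = x) ∧ (∀ x : X, mul x e₀ = x) ∧
  (∀ x : X, mul (inv x) x = e₀) ∧ (∀ x : X, mul x (inv x) = e₀) ∧
  (∀ x y : X, p (mul x y) = p x * p y)

open unitInterval

theorem Path.mul_homotopic_trans {M : Type*} [TopologicalSpace M] [Mul M] [ContinuousMul M]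
    {a₁ b₁ a₂ b₂ : M} (γ₁ : Path a₁ b₁) (γ₂ : Path a₂ b₂) :
    (γ₁.mul γ₂).Homotopic
      ((γ₁.map (continuous_mul_const a₂)).trans (γ₂.map (continuous_const_mul b₁))) := by
  have h : ((γ₁.trans (.refl b₁)).mul ((Path.refl a₂).trans γ₂)) =
      (γ₁.map (continuous_mul_const a₂)).trans (γ₂.map (continuous_const_mul b₁)) := by
    ext t
    simp only [Path.mul_apply, Path.trans_apply, Path.refl_apply, Path.map_coe, Function.comp_apply]
    split_ifs <;> rfl
  rw [← h]
  exact ⟨(Path.Homotopic.prodHomotopy (Path.Homotopy.transRefl γ₁).symm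
    (Path.Homotopy.reflTrans γ₂).symm).map ⟨_, continuous_mul⟩⟩

theorem IsCoveringMap.existsUnique_continuousMap_lifts_of_loops {E X A : Type*}
    [TopologicalSpace E] [TopologicalSpace X] [TopologicalSpace A] [PathConnectedSpace A]
    [LocallyPathConnectedSpace A] {p : E → X} (cov : IsCoveringMap p) (f : C(A, X)) {a₀ : A}
    {e₀ : E} (he : p e₀ = f a₀)
    (loops : ∀ (γ : Path a₀ a₀) (Γ : C(I, E)), Γ 0 = e₀ → p ∘ Γ = f ∘ γ → Γ 1 = e₀) :
    ∃! F : C(A, E), F a₀ = e₀ ∧ p ∘ F = f := by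
  refine cov.existsUnique_continuousMap_lifts_of_range_le he ?_
  rintro _ ⟨γ, rfl⟩
  induction γ using Path.Homotopic.Quotient.ind with | mk γ => ?_
  obtain ⟨Γ, hΓp, hΓ0⟩ := cov.exists_path_lifts (f.comp γ.toContinuousMap) e₀ (by simp [he])
  refine ⟨.mk ⟨Γ, hΓ0, loops γ Γ hΓ0 hΓp⟩, ?_⟩
  rw [FundamentalGroup.mapOfEq_apply, FundamentalGroup.map_apply]
  refine (Path.Homotopic.Quotient.mk_cast ..).symm.trans (congrArg Path.Homotopic.Quotient.mk ?_)
  ext t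
  exact congrFun hΓp t

theorem IsCoveringMap.exists_lift_mul {M Y : Type*} [TopologicalSpace M] [Monoid M]
    [ContinuousMul M] [TopologicalSpace Y] [PathConnectedSpace Y] [LocallyPathConnectedSpace Y]
    {p : Y → M} (hp : IsCoveringMap p) {e₀ : Y} (he : p e₀ = 1) :
    ∃ m : C(Y × Y, Y), m (e₀, e₀) = e₀ ∧ ∀ x y, p (m (x, y)) = p x * p y := by
  let f : C(Y × Y, M) := ⟨fun q => p q.1 * p q.2, by have := hp.continuous; fun_prop⟩
  have loops (ℓ : Path (e₀, e₀) (e₀, e₀)) (Γ : C(I, Y)) (hΓ₀ : Γ 0 = e₀) (hΓp : p ∘ Γ = f ∘ ℓ) :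
      Γ 1 = e₀ := by
    let a := ℓ.map continuous_fst
    let b := ℓ.map continuous_snd
    have hom := (a.map hp.continuous).mul_homotopic_trans (b.map hp.continuous)
    have hΓ : Γ = hp.liftPath ((a.map hp.continuous).mul (b.map hp.continuous)).toContinuousMap
        e₀ (by simp [he]) := (hp.eq_liftPath_iff' _).2 ⟨hΓp, hΓ₀⟩
    have hab : (a.trans b).toContinuousMap = hp.liftPath (((a.map hp.continuous).map
        (continuous_mul_const (p e₀))).trans ((b.map hp.continuous).map
        (continuous_const_mul (p e₀)))).toContinuousMap e₀ (by simp [he]) := by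
      refine (hp.eq_liftPath_iff' _).2 ⟨funext fun t => ?_, (a.trans b).source⟩
      simp only [Function.comp_apply, Path.coe_toContinuousMap, Path.trans_apply]
      split_ifs <;> simp [he]
    rw [hΓ, hp.liftPath_apply_one_eq_of_homotopicRel hom e₀ _ (by simp [he]), ← hab]
    exact (a.trans b).target
  obtain ⟨m, ⟨hm₀, hmp⟩, -⟩ :=
    hp.existsUnique_continuousMap_lifts_of_loops f (a₀ := (e₀, e₀)) (by simp [f, he]) loops
  exact ⟨m, hm₀, fun x y => congrFun hmp (x, y)⟩

section LiftedGroup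

variable {G X : Type*} [TopologicalSpace G] [Group G] [TopologicalSpace X] {p : X → G} {e₀ : X}

theorem IsCoveringMap.exists_lift_inv [ContinuousInv G] [PathConnectedSpace X]
    [LocallyPathConnectedSpace X] (hp : IsCoveringMap p) (he : p e₀ = 1) (m : C(X × X, X))
    (hm : ∀ x, m (e₀, x) = x) (hmp : ∀ x y, p (m (x, y)) = p x * p y) :
    ∃ i : C(X, X), i e₀ = e₀ ∧ ∀ x, p (i x) = (p x)⁻¹ := by
  let f : C(X, G) := ⟨fun x => (p x)⁻¹, hp.continuous.inv⟩
  have loops (γ : Path e₀ e₀) (Γ : C(I, X)) (hΓ₀ : Γ 0 = e₀) (hΓp : p ∘ Γ = f ∘ γ) :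
      Γ 1 = e₀ := by
    have hpΓ (t : I) : p (Γ t) = (p (γ t))⁻¹ := congrFun hΓp t
    have hconst : m (γ 1, Γ 1) = m (γ 0, Γ 0) :=
      hp.const_of_comp (g := fun t => m (γ t, Γ t)) (by fun_prop)
        (fun t t' => by simp only [hmp, hpΓ, mul_inv_cancel]) 1 0
    simpa [hm, hΓ₀] using hconst
  obtain ⟨i, ⟨hi₀, hip⟩, -⟩ :=
    hp.existsUnique_continuousMap_lifts_of_loops f (by simp [f, he]) loops
  exact ⟨i, hi₀, fun x => congrFun hip x⟩

theorem IsCoveringMap.exists_isLiftedGroupStructure [IsTopologicalGroup G] [PathConnectedSpace X]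
    [LocallyPathConnectedSpace X] (hp : IsCoveringMap p) (he : p e₀ = 1) :
    ∃ mul inv, IsLiftedGroupStructure p e₀ mul inv := by
  obtain ⟨m, hm₀, hmp⟩ := hp.exists_lift_mul he
  have left_id (x : X) : m (e₀, x) = x :=
    congrFun (hp.eq_of_comp_eq (g₁ := fun x => m (e₀, x)) (by fun_prop) continuous_id
      (funext fun x => by simp [hmp, he]) e₀ hm₀) x
  have right_id (x : X) : m (x, e₀) = x :=
    congrFun (hp.eq_of_comp_eq (g₁ := fun x => m (x, e₀)) (by fun_prop) continuous_id
      (funext fun x => by simp [hmp, he]) e₀ hm₀) x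
  have assoc (x y z : X) : m (m (x, y), z) = m (x, m (y, z)) :=
    congrFun (hp.eq_of_comp_eq (g₁ := fun w : X × X × X => m (m (w.1, w.2.1), w.2.2))
      (g₂ := fun w => m (w.1, m (w.2.1, w.2.2))) (by fun_prop) (by fun_prop)
      (funext fun w => by simp [hmp, mul_assoc]) (e₀, e₀, e₀) (by simp [hm₀])) (x, y, z)
  obtain ⟨i, hi₀, hip⟩ := hp.exists_lift_inv he m left_id hmp
  have left_inv (x : X) : m (i x, x) = e₀ :=
    congrFun (hp.eq_of_comp_eq (g₁ := fun x => m (i x, x)) (by fun_prop) continuous_const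
      (funext fun x => by simp [hmp, hip, he]) e₀ (by simp [hi₀, hm₀])) x
  have right_inv (x : X) : m (x, i x) = e₀ :=
    congrFun (hp.eq_of_comp_eq (g₁ := fun x => m (x, i x)) (by fun_prop) continuous_const
      (funext fun x => by simp [hmp, hip, he]) e₀ (by simp [hi₀, hm₀])) x
  exact ⟨fun x y => m (x, y), i, m.continuous, i.continuous, assoc, left_id, right_id, left_inv,
    right_inv, hmp⟩

namespace IsLiftedGroupStructure

variable {mul : X → X → X} {inv : X → X}

theorem map_base (h : IsLiftedGroupStructure p e₀ mul inv) : p e₀ = 1 := by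
  obtain ⟨-, -, -, left_id, -, -, -, map_mul⟩ := h
  simpa [left_id] using map_mul e₀ e₀

theorem map_inv (h : IsLiftedGroupStructure p e₀ mul inv) (x : X) : p (inv x) = (p x)⁻¹ := by
  have hbase := h.map_base
  obtain ⟨-, -, -, -, -, left_inv, -, map_mul⟩ := h
  rw [eq_inv_iff_mul_eq_one, ← map_mul, left_inv, hbase]

theorem inv_base (h : IsLiftedGroupStructure p e₀ mul inv) : inv e₀ = e₀ := by
  obtain ⟨-, -, -, -, right_id, left_inv, -, -⟩ := h
  simpa [right_id] using left_inv e₀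

theorem unique [ConnectedSpace X] (hp : IsCoveringMap p) {mul₁ mul₂ : X → X → X}
    {inv₁ inv₂ : X → X} (h₁ : IsLiftedGroupStructure p e₀ mul₁ inv₁)
    (h₂ : IsLiftedGroupStructure p e₀ mul₂ inv₂) : mul₁ = mul₂ ∧ inv₁ = inv₂ := by
  have map_inv₁ := h₁.map_inv
  have map_inv₂ := h₂.map_inv
  have inv_base := h₁.inv_base.trans h₂.inv_base.symm
  obtain ⟨hc₁, hi₁, -, left_id₁, -, -, -, map_mul₁⟩ := h₁
  obtain ⟨hc₂, hi₂, -, left_id₂, -, -, -, map_mul₂⟩ := h₂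
  have hinv := hp.eq_of_comp_eq hi₁ hi₂ (funext fun x => by simp [map_inv₁, map_inv₂]) e₀ inv_base
  have hmul := hp.eq_of_comp_eq hc₁ hc₂ (funext fun q => by simp [map_mul₁, map_mul₂]) (e₀, e₀)
    (by simp [left_id₁, left_id₂])
  exact ⟨funext₂ fun x y => congrFun hmul (x, y), hinv⟩

end IsLiftedGroupStructure

end LiftedGroup

/-- If `G` is a topological group with identity `e` and `p : X → G` is a covering map
with `X` path-connected and locally path-connected, then for any point `e₀` in the fibre
over `e` there is a unique topological group structure on `X` with identity `e₀` such
that `p` is a (continuous) group homomorphism. -/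
theorem covering_space_of_topological_group_unique_group_structure
    (G X : Type*) [TopologicalSpace G] [Group G] [IsTopologicalGroup G]
    [TopologicalSpace X] [PathConnectedSpace X] [LocallyPathConnectedSpace X]
    (p : X → G) (hp : IsCoveringMap p) (e₀ : X) (he : p e₀ = 1) :
    (∃ mul inv, IsLiftedGroupStructure p e₀ mul inv) ∧
    (∀ mul₁ inv₁ mul₂ inv₂, IsLiftedGroupStructure p e₀ mul₁ inv₁ →
      IsLiftedGroupStructure p e₀ mul₂ inv₂ → mul₁ = mul₂ ∧ inv₁ = inv₂) :=
  ⟨hp.exists_isLiftedGroupStructure he, fun _ _ _ _ => IsLiftedGroupStructure.unique hp⟩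
end
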